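/- Let u : R^2 → S^2 be harmonic with Δu + |∇u|^2 u = 0 and let v : R^2 → R^3 be smooth with u · v = 0 and Δv + |∇u|^2 v + 2(∇u·∇v) u = 0. Then the real-valued functions u_x · v_x - u_y · v_y and u_x · v_y + u_y · v_x are harmonic on R^2. -/

import Mathlib

open Matrix

/-- Partial derivative with respect to the first (x) variable. -/
noncomputable def pdx {E : Type*} [NormedAddCommGroup E] [NormedSpace ℝ E]
    (u : ℝ × ℝ → E) (p : ℝ × ℝ) : E := deriv (fun t => u (t, p.2)) p.1

/-- Partial derivative with respect to the second (y) variable. -/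
noncomputable def pdy {E : Type*} [NormedAddCommGroup E] [NormedSpace ℝ E]
    (u : ℝ × ℝ → E) (p : ℝ × ℝ) : E := deriv (fun t => u (p.1, t)) p.2

variable {E : Type*} [NormedAddCommGroup E] [NormedSpace ℝ E]

lemma hasDerivAt_slice_x (f : ℝ × ℝ → E) (hf : Differentiable ℝ f) (p : ℝ × ℝ) :
    HasDerivAt (fun t => f (t, p.2)) (fderiv ℝ f p ((1:ℝ), (0:ℝ))) p.1 := by
  have h1 : HasDerivAt (fun t : ℝ => (t, p.2)) ((1:ℝ), (0:ℝ)) p.1 :=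
    (hasDerivAt_id p.1).prodMk (hasDerivAt_const _ _)
  have h2 : HasFDerivAt f (fderiv ℝ f p) (p.1, p.2) := by
    simpa using (hf p).hasFDerivAt
  exact h2.comp_hasDerivAt p.1 h1

lemma hasDerivAt_slice_y (f : ℝ × ℝ → E) (hf : Differentiable ℝ f) (p : ℝ × ℝ) :
    HasDerivAt (fun t => f (p.1, t)) (fderiv ℝ f p ((0:ℝ), (1:ℝ))) p.2 := by
  have h1 : HasDerivAt (fun t : ℝ => (p.1, t)) ((0:ℝ), (1:ℝ)) p.2 :=
    (hasDerivAt_const _ _).prodMk (hasDerivAt_id p.2)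
  have h2 : HasFDerivAt f (fderiv ℝ f p) (p.1, p.2) := by
    simpa using (hf p).hasFDerivAt
  exact h2.comp_hasDerivAt p.2 h1

lemma pdx_eq_fderiv (f : ℝ × ℝ → E) (hf : Differentiable ℝ f) (p : ℝ × ℝ) :
    pdx f p = fderiv ℝ f p ((1:ℝ), (0:ℝ)) := (hasDerivAt_slice_x f hf p).deriv

lemma pdy_eq_fderiv (f : ℝ × ℝ → E) (hf : Differentiable ℝ f) (p : ℝ × ℝ) :
    pdy f p = fderiv ℝ f p ((0:ℝ), (1:ℝ)) := (hasDerivAt_slice_y f hf p).deriv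

lemma hasDerivAt_pdx_slice_x (f : ℝ × ℝ → E) (hf : Differentiable ℝ f) (p : ℝ × ℝ) :
    HasDerivAt (fun t => f (t, p.2)) (pdx f p) p.1 := by
  rw [pdx_eq_fderiv f hf p]; exact hasDerivAt_slice_x f hf p

lemma hasDerivAt_pdy_slice_y (f : ℝ × ℝ → E) (hf : Differentiable ℝ f) (p : ℝ × ℝ) :
    HasDerivAt (fun t => f (p.1, t)) (pdy f p) p.2 := by
  rw [pdy_eq_fderiv f hf p]; exact hasDerivAt_slice_y f hf p

lemma contDiff_pdx (f : ℝ × ℝ → E) (hf : ContDiff ℝ (⊤ : ℕ∞) f) : ContDiff ℝ (⊤ : ℕ∞) (pdx f) := by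
  have h : pdx f = fun p => fderiv ℝ f p ((1:ℝ), (0:ℝ)) :=
    funext fun p => pdx_eq_fderiv f (hf.differentiable (by simp)) p
  rw [h]
  exact (hf.fderiv_right (by simp)).clm_apply contDiff_const

lemma contDiff_pdy (f : ℝ × ℝ → E) (hf : ContDiff ℝ (⊤ : ℕ∞) f) : ContDiff ℝ (⊤ : ℕ∞) (pdy f) := by
  have h : pdy f = fun p => fderiv ℝ f p ((0:ℝ), (1:ℝ)) :=
    funext fun p => pdy_eq_fderiv f (hf.differentiable (by simp)) p
  rw [h]
  exact (hf.fderiv_right (by simp)).clm_apply contDiff_const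

lemma pdx_pdy_comm (f : ℝ × ℝ → E) (hf : ContDiff ℝ (⊤ : ℕ∞) f) (p : ℝ × ℝ) :
    pdx (pdy f) p = pdy (pdx f) p := by
  have hdf : Differentiable ℝ f := (hf.differentiable (by simp))
  have hf' : ContDiff ℝ (⊤ : ℕ∞) (fderiv ℝ f) := hf.fderiv_right (by simp)
  have hx : pdx f = fun q => fderiv ℝ f q ((1:ℝ), (0:ℝ)) :=
    funext fun q => pdx_eq_fderiv f hdf q
  have hy : pdy f = fun q => fderiv ℝ f q ((0:ℝ), (1:ℝ)) :=
    funext fun q => pdy_eq_fderiv f hdf q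
  have hxd : ContDiff ℝ (⊤ : ℕ∞) (pdx f) := contDiff_pdx f hf
  have hyd : ContDiff ℝ (⊤ : ℕ∞) (pdy f) := contDiff_pdy f hf
  rw [pdx_eq_fderiv (pdy f) (hyd.differentiable (by simp)) p, pdy_eq_fderiv (pdx f) (hxd.differentiable (by simp)) p,
    hx, hy]
  have key : ∀ a b : ℝ × ℝ, fderiv ℝ (fun q => fderiv ℝ f q a) p b
      = fderiv ℝ (fderiv ℝ f) p b a := by
    intro a b
    rw [fderiv_clm_apply ((hf'.differentiable (by simp)) p) (differentiableAt_const a)]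
    simp
  rw [key ((1:ℝ),(0:ℝ)) ((0:ℝ),(1:ℝ)), key ((0:ℝ),(1:ℝ)) ((1:ℝ),(0:ℝ))]
  exact second_derivative_symmetric (fun y => (hdf y).hasFDerivAt)
    (((hf'.differentiable (by simp)) p).hasFDerivAt) _ _

lemma HasDerivAt.dotP {f g : ℝ → Fin 3 → ℝ} {f' g' : Fin 3 → ℝ} {t : ℝ}
    (hf : HasDerivAt f f' t) (hg : HasDerivAt g g' t) :
    HasDerivAt (fun s => f s ⬝ᵥ g s) (f' ⬝ᵥ g t + f t ⬝ᵥ g') t := by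
  have : HasDerivAt (fun s => ∑ i, f s i * g s i)
      (∑ i, (f' i * g t i + f t i * g' i)) t :=
    HasDerivAt.fun_sum fun i _ => ((hasDerivAt_pi.mp hf i).mul (hasDerivAt_pi.mp hg i))
  simpa [dotProduct, Finset.sum_add_distrib] using this

lemma contDiff_dot {f g : ℝ × ℝ → Fin 3 → ℝ} (hf : ContDiff ℝ (⊤ : ℕ∞) f) (hg : ContDiff ℝ (⊤ : ℕ∞) g) :
    ContDiff ℝ (⊤ : ℕ∞) (fun q => f q ⬝ᵥ g q) := by
  simp only [dotProduct]
  exact ContDiff.sum fun i _ => ((contDiff_pi.mp hf i).mul (contDiff_pi.mp hg i))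

lemma pdx_dot {f g : ℝ × ℝ → Fin 3 → ℝ} (hf : ContDiff ℝ (⊤ : ℕ∞) f) (hg : ContDiff ℝ (⊤ : ℕ∞) g)
    (p : ℝ × ℝ) :
    pdx (fun q => f q ⬝ᵥ g q) p = pdx f p ⬝ᵥ g p + f p ⬝ᵥ pdx g p :=
  ((hasDerivAt_pdx_slice_x f (hf.differentiable (by simp)) p).dotP
    (hasDerivAt_pdx_slice_x g (hg.differentiable (by simp)) p)).deriv

lemma pdy_dot {f g : ℝ × ℝ → Fin 3 → ℝ} (hf : ContDiff ℝ (⊤ : ℕ∞) f) (hg : ContDiff ℝ (⊤ : ℕ∞) g)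
    (p : ℝ × ℝ) :
    pdy (fun q => f q ⬝ᵥ g q) p = pdy f p ⬝ᵥ g p + f p ⬝ᵥ pdy g p :=
  ((hasDerivAt_pdy_slice_y f (hf.differentiable (by simp)) p).dotP
    (hasDerivAt_pdy_slice_y g (hg.differentiable (by simp)) p)).deriv

lemma pdx_neg (f : ℝ × ℝ → E) (p : ℝ × ℝ) :
    pdx (fun q => -(f q)) p = -(pdx f p) := by
  simp only [pdx]; exact deriv.neg

lemma pdy_neg (f : ℝ × ℝ → E) (p : ℝ × ℝ) :
    pdy (fun q => -(f q)) p = -(pdy f p) := by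
  simp only [pdy]; exact deriv.neg

lemma pdx_sub (f g : ℝ × ℝ → E) (hf : Differentiable ℝ f) (hg : Differentiable ℝ g)
    (p : ℝ × ℝ) : pdx (fun q => f q - g q) p = pdx f p - pdx g p :=
  ((hasDerivAt_pdx_slice_x f hf p).sub (hasDerivAt_pdx_slice_x g hg p)).deriv

lemma pdy_sub (f g : ℝ × ℝ → E) (hf : Differentiable ℝ f) (hg : Differentiable ℝ g)
    (p : ℝ × ℝ) : pdy (fun q => f q - g q) p = pdy f p - pdy g p :=
  ((hasDerivAt_pdy_slice_y f hf p).sub (hasDerivAt_pdy_slice_y g hg p)).deriv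

lemma pdx_add (f g : ℝ × ℝ → E) (hf : Differentiable ℝ f) (hg : Differentiable ℝ g)
    (p : ℝ × ℝ) : pdx (fun q => f q + g q) p = pdx f p + pdx g p :=
  ((hasDerivAt_pdx_slice_x f hf p).add (hasDerivAt_pdx_slice_x g hg p)).deriv

lemma pdy_add (f g : ℝ × ℝ → E) (hf : Differentiable ℝ f) (hg : Differentiable ℝ g)
    (p : ℝ × ℝ) : pdy (fun q => f q + g q) p = pdy f p + pdy g p :=
  ((hasDerivAt_pdy_slice_y f hf p).add (hasDerivAt_pdy_slice_y g hg p)).deriv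

lemma pdx_const (c : E) (p : ℝ × ℝ) : pdx (fun _ => c) p = 0 := by
  simp [pdx]

lemma pdy_const (c : E) (p : ℝ × ℝ) : pdy (fun _ => c) p = 0 := by
  simp [pdy]


/-- If `u : ℝ² → S²` is harmonic and `v` is a tangent field solving the linearized
equation, then `u_x · v_x - u_y · v_y` and `u_x · v_y + u_y · v_x` are harmonic on `ℝ²`. -/
theorem stmt14 (u v : ℝ × ℝ → (Fin 3 → ℝ)) (hu : ContDiff ℝ (⊤ : ℕ∞) u) (hv : ContDiff ℝ (⊤ : ℕ∞) v)
    (hsphere : ∀ p, u p ⬝ᵥ u p = 1)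
    (htan : ∀ p, u p ⬝ᵥ v p = 0)
    (hharm : ∀ p, pdx (pdx u) p + pdy (pdy u) p
      + (pdx u p ⬝ᵥ pdx u p + pdy u p ⬝ᵥ pdy u p) • u p = 0)
    (hlin : ∀ p, pdx (pdx v) p + pdy (pdy v) p
      + (pdx u p ⬝ᵥ pdx u p + pdy u p ⬝ᵥ pdy u p) • v p
      + (2 * (pdx u p ⬝ᵥ pdx v p + pdy u p ⬝ᵥ pdy v p)) • u p = 0) :
    (∀ p, pdx (pdx (fun q => pdx u q ⬝ᵥ pdx v q - pdy u q ⬝ᵥ pdy v q)) p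
        + pdy (pdy (fun q => pdx u q ⬝ᵥ pdx v q - pdy u q ⬝ᵥ pdy v q)) p = 0) ∧
    (∀ p, pdx (pdx (fun q => pdx u q ⬝ᵥ pdy v q + pdy u q ⬝ᵥ pdx v q)) p
        + pdy (pdy (fun q => pdx u q ⬝ᵥ pdy v q + pdy u q ⬝ᵥ pdx v q)) p = 0) := by
  have hux : ContDiff ℝ (⊤ : ℕ∞) (pdx u) := contDiff_pdx u hu
  have huy : ContDiff ℝ (⊤ : ℕ∞) (pdy u) := contDiff_pdy u hu
  have hvx : ContDiff ℝ (⊤ : ℕ∞) (pdx v) := contDiff_pdx v hv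
  have hvy : ContDiff ℝ (⊤ : ℕ∞) (pdy v) := contDiff_pdy v hv
  -- orthogonality relations
  have hsx : ∀ p, pdx u p ⬝ᵥ u p = 0 := by
    intro p
    have h0 : pdx (fun q => u q ⬝ᵥ u q) p = 0 := by
      have he : (fun q => u q ⬝ᵥ u q) = fun _ => (1:ℝ) := funext hsphere
      rw [he, pdx_const]
    rw [pdx_dot hu hu p] at h0
    have hc : u p ⬝ᵥ pdx u p = pdx u p ⬝ᵥ u p := dotProduct_comm _ _
    linarith [h0, hc]
  have hsy : ∀ p, pdy u p ⬝ᵥ u p = 0 := by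
    intro p
    have h0 : pdy (fun q => u q ⬝ᵥ u q) p = 0 := by
      have he : (fun q => u q ⬝ᵥ u q) = fun _ => (1:ℝ) := funext hsphere
      rw [he, pdy_const]
    rw [pdy_dot hu hu p] at h0
    have hc : u p ⬝ᵥ pdy u p = pdy u p ⬝ᵥ u p := dotProduct_comm _ _
    linarith [h0, hc]
  have htx : ∀ p, pdx u p ⬝ᵥ v p + u p ⬝ᵥ pdx v p = 0 := by
    intro p
    have h0 : pdx (fun q => u q ⬝ᵥ v q) p = 0 := by
      have he : (fun q => u q ⬝ᵥ v q) = fun _ => (0:ℝ) := funext htan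
      rw [he, pdx_const]
    rw [pdx_dot hu hv p] at h0; exact h0
  have hty : ∀ p, pdy u p ⬝ᵥ v p + u p ⬝ᵥ pdy v p = 0 := by
    intro p
    have h0 : pdy (fun q => u q ⬝ᵥ v q) p = 0 := by
      have he : (fun q => u q ⬝ᵥ v q) = fun _ => (0:ℝ) := funext htan
      rw [he, pdy_const]
    rw [pdy_dot hu hv p] at h0; exact h0
  -- Laplacian identities
  have hlapu : ∀ p, pdx (pdx u) p =
      -((pdx u p ⬝ᵥ pdx u p + pdy u p ⬝ᵥ pdy u p) • u p) - pdy (pdy u) p := by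
    intro p
    have h := hharm p
    have h2 : pdx (pdx u) p + pdy (pdy u) p
        = -((pdx u p ⬝ᵥ pdx u p + pdy u p ⬝ᵥ pdy u p) • u p) :=
      eq_neg_of_add_eq_zero_left h
    rw [eq_sub_iff_add_eq]; exact h2
  have hlapv : ∀ p, pdx (pdx v) p =
      -((pdx u p ⬝ᵥ pdx u p + pdy u p ⬝ᵥ pdy u p) • v p)
      - ((2 * (pdx u p ⬝ᵥ pdx v p + pdy u p ⬝ᵥ pdy v p)) • u p) - pdy (pdy v) p := by
    intro p
    have h := hlin p
    rw [← sub_eq_zero, ← h]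
    abel
  have hCR1 : ∀ p, pdx (fun q => pdx u q ⬝ᵥ pdx v q - pdy u q ⬝ᵥ pdy v q) p
      + pdy (fun q => pdx u q ⬝ᵥ pdy v q + pdy u q ⬝ᵥ pdx v q) p = 0 := by
    intro p
    rw [pdx_sub (fun q => pdx u q ⬝ᵥ pdx v q) (fun q => pdy u q ⬝ᵥ pdy v q)
        ((contDiff_dot hux hvx).differentiable (by simp))
        ((contDiff_dot huy hvy).differentiable (by simp)) p,
      pdy_add (fun q => pdx u q ⬝ᵥ pdy v q) (fun q => pdy u q ⬝ᵥ pdx v q)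
        ((contDiff_dot hux hvy).differentiable (by simp))
        ((contDiff_dot huy hvx).differentiable (by simp)) p,
      pdx_dot hux hvx p, pdx_dot huy hvy p, pdy_dot hux hvy p, pdy_dot huy hvx p,
      pdx_pdy_comm u hu p, pdx_pdy_comm v hv p, hlapu p, hlapv p]
    simp only [sub_dotProduct, neg_dotProduct, smul_dotProduct, dotProduct_sub,
      dotProduct_neg, dotProduct_smul, smul_eq_mul]
    linear_combination (-(pdx u p ⬝ᵥ pdx u p + pdy u p ⬝ᵥ pdy u p)) * htx p
      - (2 * (pdx u p ⬝ᵥ pdx v p + pdy u p ⬝ᵥ pdy v p)) * hsx p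
  have hCR2 : ∀ p, pdx (fun q => pdx u q ⬝ᵥ pdy v q + pdy u q ⬝ᵥ pdx v q) p
      = pdy (fun q => pdx u q ⬝ᵥ pdx v q - pdy u q ⬝ᵥ pdy v q) p := by
    intro p
    rw [pdx_add (fun q => pdx u q ⬝ᵥ pdy v q) (fun q => pdy u q ⬝ᵥ pdx v q)
        ((contDiff_dot hux hvy).differentiable (by simp))
        ((contDiff_dot huy hvx).differentiable (by simp)) p,
      pdy_sub (fun q => pdx u q ⬝ᵥ pdx v q) (fun q => pdy u q ⬝ᵥ pdy v q)
        ((contDiff_dot hux hvx).differentiable (by simp))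
        ((contDiff_dot huy hvy).differentiable (by simp)) p,
      pdx_dot hux hvy p, pdx_dot huy hvx p, pdy_dot hux hvx p, pdy_dot huy hvy p,
      pdx_pdy_comm u hu p, pdx_pdy_comm v hv p, hlapu p, hlapv p]
    simp only [sub_dotProduct, neg_dotProduct, smul_dotProduct, dotProduct_sub,
      dotProduct_neg, dotProduct_smul, smul_eq_mul]
    linear_combination (-(pdx u p ⬝ᵥ pdx u p + pdy u p ⬝ᵥ pdy u p)) * hty p
      - (2 * (pdx u p ⬝ᵥ pdx v p + pdy u p ⬝ᵥ pdy v p)) * hsy p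
  have hpc : ContDiff ℝ (⊤ : ℕ∞) (fun q => pdx u q ⬝ᵥ pdx v q - pdy u q ⬝ᵥ pdy v q) :=
    (contDiff_dot hux hvx).sub (contDiff_dot huy hvy)
  have hqc : ContDiff ℝ (⊤ : ℕ∞) (fun q => pdx u q ⬝ᵥ pdy v q + pdy u q ⬝ᵥ pdx v q) :=
    (contDiff_dot hux hvy).add (contDiff_dot huy hvx)
  have e1 : pdx (fun q => pdx u q ⬝ᵥ pdx v q - pdy u q ⬝ᵥ pdy v q)
      = fun q => -(pdy (fun q' => pdx u q' ⬝ᵥ pdy v q' + pdy u q' ⬝ᵥ pdx v q') q) :=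
    funext fun q => eq_neg_of_add_eq_zero_left (hCR1 q)
  have e2 : pdy (fun q => pdx u q ⬝ᵥ pdx v q - pdy u q ⬝ᵥ pdy v q)
      = pdx (fun q => pdx u q ⬝ᵥ pdy v q + pdy u q ⬝ᵥ pdx v q) :=
    funext fun q => (hCR2 q).symm
  constructor
  · intro p
    rw [e1, e2, pdx_neg, pdx_pdy_comm _ hqc p]
    simp
  · intro p
    have e1' : pdy (fun q => pdx u q ⬝ᵥ pdy v q + pdy u q ⬝ᵥ pdx v q)
        = fun q => -(pdx (fun q' => pdx u q' ⬝ᵥ pdx v q' - pdy u q' ⬝ᵥ pdy v q') q) :=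
      funext fun q => eq_neg_of_add_eq_zero_right (hCR1 q)
    rw [← e2, e1', pdy_neg, pdx_pdy_comm _ hpc p]
    simp
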